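/- Propositional BD+ strong semantic consequence under the Dunn two-dimensional semantics coincides with consequence under the star semantics: Γ ⊨ A (preservation of 1 in all Dunn-models) iff Γ ⊨* A (preservation of truth at all worlds of all star models with involutive *). -/
import Mathlib


inductive Fm : Type where
  | atom : Nat → Fm
  | bot : Fm
  | snot : Fm → Fm
  | and : Fm → Fm → Fm
  | or : Fm → Fm → Fm
  | imp : Fm → Fm → Fm
deriving DecidableEq

/-- Intuitionistic/Boolean negation `¬A := A → ⊥`. -/
def negFm (A : Fm) : Fm := Fm.imp A Fm.bot

/-- Biconditional `A ↔ B := (A→B) ∧ (B→A)`. -/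
def iffFm (A B : Fm) : Fm := Fm.and (Fm.imp A B) (Fm.imp B A)

/-- Belnap–Dunn two-dimensional interpretation: first component is "1 ∈ I(A)",
second is "0 ∈ I(A)". -/
def tv (v : Nat → Bool × Bool) : Fm → Bool × Bool
  | .atom n => v n
  | .bot => (false, true)
  | .snot A => ((tv v A).2, (tv v A).1)
  | .and A B => ((tv v A).1 && (tv v B).1, (tv v A).2 || (tv v B).2)
  | .or A B => ((tv v A).1 || (tv v B).1, (tv v A).2 && (tv v B).2)
  | .imp A B => (!(tv v A).1 || (tv v B).1, !(tv v A).2 && (tv v B).2)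

structure StarModel where
  W : Type
  star : W → W
  invol : ∀ w, star (star w) = w
  V : W → Nat → Bool

/-- Star-semantics evaluation: `sv M A w = true` iff `I(w, A) = 1`. -/
def sv (M : StarModel) : Fm → M.W → Bool
  | .atom n, w => M.V w n
  | .bot, _ => false
  | .snot A, w => !(sv M A (M.star w))
  | .and A B, w => sv M A w && sv M B w
  | .or A B, w => sv M A w || sv M B w
  | .imp A B, w => !(sv M A w) || sv M B w

/-- Dunn-semantics consequence: preservation of the value 1. -/
def dunnCons (Γ : Set Fm) (A : Fm) : Prop :=
  ∀ v : Nat → Bool × Bool, (∀ B ∈ Γ, (tv v B).1 = true) → (tv v A).1 = true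

/-- Star-semantics consequence: preservation of truth at every world of every
star model with involutive `*`. -/
def starCons (Γ : Set Fm) (A : Fm) : Prop :=
  ∀ (M : StarModel) (w : M.W), (∀ B ∈ Γ, sv M B w = true) → sv M A w = true


lemma star_to_tv (M : StarModel) (w : M.W) (B : Fm) :
    tv (fun n => (M.V w n, !M.V (M.star w) n)) B = (sv M B w, !sv M B (M.star w)) := by
  induction B with
  | atom n => rfl
  | bot => rfl
  | snot A ih => simp [tv, sv, ih, M.invol]
  | and A B ihA ihB => simp [tv, sv, ihA, ihB]
  | or A B ihA ihB => simp [tv, sv, ihA, ihB]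
  | imp A B ihA ihB => simp [tv, sv, ihA, ihB]

def toStar (v : Nat → Bool × Bool) : StarModel where
  W := Bool
  star := not
  invol := by simp
  V w n := if w then (v n).1 else !(v n).2

lemma tv_to_star (v : Nat → Bool × Bool) (B : Fm) (w : Bool) :
    sv (toStar v) B w = if w then (tv v B).1 else !(tv v B).2 := by
  induction B generalizing w with
  | atom n => rfl
  | bot => simp [sv, tv]
  | snot A ih =>
      have hs : (toStar v).star = not := rfl
      cases w <;> simp [tv, sv, ih, hs]
  | and A B ihA ihB => cases w <;> simp [tv, sv, ihA, ihB]
  | or A B ihA ihB => cases w <;> simp [tv, sv, ihA, ihB]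
  | imp A B ihA ihB => cases w <;> simp [tv, sv, ihA, ihB]

/-- BD+ consequence under the Dunn two-dimensional semantics coincides with
consequence under the star semantics. -/
theorem dunn_iff_star (Γ : Set Fm) (A : Fm) : dunnCons Γ A ↔ starCons Γ A := by
  constructor
  · intro h M w hprem
    have := h (fun n => (M.V w n, !M.V (M.star w) n))
      (fun B hB => by rw [star_to_tv]; exact hprem B hB)
    rwa [star_to_tv] at this
  · intro h v hprem
    have := h (toStar v) true
      (fun B hB => by rw [tv_to_star]; simpa using hprem B hB)
    rwa [tv_to_star] at this
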